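/- arXiv:0802.1380 — 2 statements merged into one kernel-verified Lean document; each statement's English description precedes it below -/
import Mathlib

section
/- Fix n ≥ 1 and finite nonempty sets 𝒳₁, 𝒳₂, 𝒴, and a causal channel specified by conditional pmfs p_i(y_i | x₁^i, x₂^i, y^{i−1}) for i = 1,…,n (each p_i(· | x₁^i, x₂^i, y^{i−1}) is a pmf on 𝒴 for every choice of the conditioning arguments). For any pair of causal input strategies, i.e. conditional pmfs q_{1,i}(x_{1,i} | x₁^{i−1}, y^{i−1}) and q_{2,i}(x_{2,i} | x₂^{i−1}, y^{i−1}), let μ be the induced joint pmf on 𝒳₁^n × 𝒳₂^n × 𝒴^n given by μ(x₁^n, x₂^n, y^n) = ∏_{i=1}^{n} q_{1,i}(x_{1,i}|x₁^{i−1},y^{i−1}) q_{2,i}(x_{2,i}|x₂^{i−1},y^{i−1}) p_i(y_i|x₁^i,x₂^i,y^{i−1}), and let I_μ(X₁^n, X₂^n → Y^n) := ∑_{i=1}^{n} I_μ((X₁^i, X₂^i) ; Y_i | Y^{i−1}) denote the directed information computed under μ with X₁, X₂, Y the coordinate projections. Suppose that I_μ(X₁^n, X₂^n → Y^n) = 0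 for every pair of non-feedback strategies, i.e. strategies in which each q_{1,i} does not depend on y^{i−1} and each q_{2,i} does not depend on y^{i−1}. Then I_μ(X₁^n, X₂^n → Y^n) = 0 for every pair of causal (feedback-dependent) input strategies q_{1,i}(x_{1,i}|x₁^{i−1},y^{i−1}), q_{2,i}(x_{2,i}|x₂^{i−1},y^{i−1}). -/
open Finset

set_option synthInstance.maxSize 1000

/-- Probability mass of the event `X = a` under the weight function `μ` on the finite
sample space `Ω`. -/
noncomputable def pmass {Ω α : Type*} [Fintype Ω] [DecidableEq α]
    (μ : Ω → ℝ) (X : Ω → α) (a : α) : ℝ := ∑ ω, if X ω = a then μ ω else 0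

/-- Shannon entropy (natural logarithm) of the discrete random variable `X` defined on the
finite probability space `(Ω, μ)`. -/
noncomputable def entropy {Ω α : Type*} [Fintype Ω] [Fintype α] [DecidableEq α]
    (μ : Ω → ℝ) (X : Ω → α) : ℝ := ∑ a, Real.negMulLog (pmass μ X a)

/-- Conditional mutual information `I(X;Y|Z) = H(X,Z) + H(Y,Z) - H(X,Y,Z) - H(Z)`. -/
noncomputable def condMutualInfo {Ω α β γ : Type*} [Fintype Ω]
    [Fintype α] [DecidableEq α] [Fintype β] [DecidableEq β] [Fintype γ] [DecidableEq γ]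
    (μ : Ω → ℝ) (X : Ω → α) (Y : Ω → β) (Z : Ω → γ) : ℝ :=
  entropy μ (fun ω => (X ω, Z ω)) + entropy μ (fun ω => (Y ω, Z ω))
    - entropy μ (fun ω => ((X ω, Y ω), Z ω)) - entropy μ Z

/-- The directed information `I(X₁^n, X₂^n → Y^n) = ∑_{i=1}^n I((X₁^i, X₂^i); Y_i | Y^{i-1})`
computed under the joint pmf `μ` on `𝒳₁^n × 𝒳₂^n × 𝒴^n`, where `X₁, X₂, Y` are the
coordinate projections. -/
noncomputable def directedInfo {𝒳₁ 𝒳₂ 𝒴 : Type*}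
    [Fintype 𝒳₁] [DecidableEq 𝒳₁] [Fintype 𝒳₂] [DecidableEq 𝒳₂]
    [Fintype 𝒴] [DecidableEq 𝒴] {n : ℕ}
    (μ : (Fin n → 𝒳₁) × (Fin n → 𝒳₂) × (Fin n → 𝒴) → ℝ) : ℝ :=
  ∑ i : Fin n, condMutualInfo μ
    (fun t => ((fun j : Fin ((i : ℕ) + 1) => t.1 (Fin.castLE i.isLt j)),
               (fun j : Fin ((i : ℕ) + 1) => t.2.1 (Fin.castLE i.isLt j))))
    (fun t => t.2.2 i)
    (fun t => fun j : Fin (i : ℕ) => t.2.2 (Fin.castLE i.isLt.le j))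

/-- The joint pmf on `𝒳₁^n × 𝒳₂^n × 𝒴^n` induced by a pair of causal input strategies
`q₁, q₂` and the channel `p`:
`μ(x₁^n, x₂^n, y^n) = ∏_i q₁,ᵢ(x₁,ᵢ|x₁^{i-1},y^{i-1}) q₂,ᵢ(x₂,ᵢ|x₂^{i-1},y^{i-1})
pᵢ(yᵢ|x₁^i,x₂^i,y^{i-1})`. -/
noncomputable def inducedLaw {𝒳₁ 𝒳₂ 𝒴 : Type*} {n : ℕ}
    (q₁ : Fin n → (Fin n → 𝒳₁) → (Fin n → 𝒴) → 𝒳₁ → ℝ)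
    (q₂ : Fin n → (Fin n → 𝒳₂) → (Fin n → 𝒴) → 𝒳₂ → ℝ)
    (p : Fin n → (Fin n → 𝒳₁) → (Fin n → 𝒳₂) → (Fin n → 𝒴) → 𝒴 → ℝ) :
    (Fin n → 𝒳₁) × (Fin n → 𝒳₂) × (Fin n → 𝒴) → ℝ :=
  fun t => ∏ i : Fin n,
    q₁ i t.1 t.2.2 (t.1 i) * q₂ i t.2.1 t.2.2 (t.2.1 i) * p i t.1 t.2.1 t.2.2 (t.2.2 i)

/-- `q` is a causal input strategy: each `q i` is a conditional pmf on `𝒳` which depends on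
its arguments only through the strict prefixes `x^{i-1}` and `y^{i-1}`. -/
def IsStrategy {𝒳 𝒴 : Type*} [Fintype 𝒳] {n : ℕ}
    (q : Fin n → (Fin n → 𝒳) → (Fin n → 𝒴) → 𝒳 → ℝ) : Prop :=
  (∀ i x y a, 0 ≤ q i x y a) ∧ (∀ i x y, ∑ a, q i x y a = 1) ∧
    (∀ i : Fin n, ∀ x x' y y', (∀ j : Fin n, (j : ℕ) < (i : ℕ) → x j = x' j) →
      (∀ j : Fin n, (j : ℕ) < (i : ℕ) → y j = y' j) → q i x y = q i x' y')

/-- `q` is a non-feedback strategy: `q i` does not depend on the past outputs `y^{i-1}`. -/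
def NoFeedback {𝒳 𝒴 : Type*} {n : ℕ}
    (q : Fin n → (Fin n → 𝒳) → (Fin n → 𝒴) → 𝒳 → ℝ) : Prop :=
  ∀ i x y y', q i x y = q i x y'

/-!
Each term `I((X₁^i, X₂^i); Y_i | Y^{i-1})` of the directed information is a sum of nonnegative
`klFun` terms, and it vanishes exactly when the joint law of `((X₁^i, X₂^i), Y_i, Y^{i-1})` factors
as `f(a, c) g(b, c)`. By the chain rule this law is `Q(a, c) B(a, b, c)`, where
`Q = ∏_{j ≤ i} q₁ⱼ q₂ⱼ` depends only on the strategies and `B = ∏_{j ≤ i} pⱼ` only on the channel.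
The uniform strategies have no feedback and full support, so the hypothesis factors
`Q_unif B = f g` with `Q_unif > 0`. Any other pair of strategies multiplies this law by
`Q / Q_unif`, a function of `(a, c)`, which preserves the factorization.
-/

open Real InformationTheory

section Pmf

variable {Ω α β γ : Type*} [Fintype Ω] [DecidableEq α] [DecidableEq β] [DecidableEq γ]

theorem pmass_nonneg {μ : Ω → ℝ} (hμ : ∀ ω, 0 ≤ μ ω) (X : Ω → α) (a : α) :
    0 ≤ pmass μ X a :=
  Finset.sum_nonneg fun ω _ => by split_ifs <;> simp [hμ ω]

theorem sum_pmass_mul [Fintype α] (μ : Ω → ℝ) (X : Ω → α) (F : α → ℝ) :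
    ∑ a, pmass μ X a * F a = ∑ ω, μ ω * F (X ω) := by
  simp only [pmass, Finset.sum_mul, ite_mul, zero_mul]
  rw [Finset.sum_comm]
  simp

theorem entropy_eq_neg_sum [Fintype α] (μ : Ω → ℝ) (X : Ω → α) :
    entropy μ X = -∑ ω, μ ω * log (pmass μ X (X ω)) := by
  rw [← sum_pmass_mul μ X fun a => log (pmass μ X a), ← Finset.sum_neg_distrib]
  simp only [entropy, negMulLog, neg_mul]

theorem pmass_map [Fintype α] (μ : Ω → ℝ) (X : Ω → α) (f : α → β) (b : β) :
    pmass μ (fun ω => f (X ω)) b = ∑ a, if f a = b then pmass μ X a else 0 := by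
  simpa only [pmass, mul_boole] using
    (sum_pmass_mul μ X fun a => if f a = b then (1 : ℝ) else 0).symm

noncomputable def jointPmf (μ : Ω → ℝ) (X : Ω → α) (Y : Ω → β) (Z : Ω → γ)
    (a : α) (b : β) (c : γ) : ℝ :=
  pmass μ (fun ω => ((X ω, Y ω), Z ω)) ((a, b), c)

variable [Fintype α] [Fintype β] [Fintype γ] (μ : Ω → ℝ) (X : Ω → α) (Y : Ω → β) (Z : Ω → γ)

theorem pmass_prod_left_eq_sum_jointPmf (a : α) (c : γ) :
    pmass μ (fun ω => (X ω, Z ω)) (a, c) = ∑ b, jointPmf μ X Y Z a b c := by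
  simp only [pmass_map μ (fun ω => ((X ω, Y ω), Z ω)) (fun v => (v.1.1, v.2)), Prod.mk.injEq,
    ite_and, Fintype.sum_prod_type, Finset.sum_ite_irrel, Finset.sum_ite_eq', Finset.mem_univ,
    if_true, Finset.sum_const_zero, jointPmf]
  rw [Finset.sum_comm]
  simp

theorem pmass_prod_right_eq_sum_jointPmf (b : β) (c : γ) :
    pmass μ (fun ω => (Y ω, Z ω)) (b, c) = ∑ a, jointPmf μ X Y Z a b c := by
  simp [jointPmf, pmass_map μ (fun ω => ((X ω, Y ω), Z ω)) (fun v => (v.1.2, v.2)),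
    Fintype.sum_prod_type, ite_and]

theorem pmass_eq_sum_sum_jointPmf (c : γ) :
    pmass μ Z c = ∑ a, ∑ b, jointPmf μ X Y Z a b c := by
  simp [jointPmf, pmass_map μ (fun ω => ((X ω, Y ω), Z ω)) (fun v => v.2),
    Fintype.sum_prod_type]

theorem condMutualInfo_eq_sum_mul_log :
    condMutualInfo μ X Y Z = ∑ a, ∑ b, ∑ c, jointPmf μ X Y Z a b c *
      (log (jointPmf μ X Y Z a b c) + log (pmass μ Z c)
        - log (pmass μ (fun ω => (X ω, Z ω)) (a, c))
        - log (pmass μ (fun ω => (Y ω, Z ω)) (b, c))) := by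
  have h := sum_pmass_mul μ (fun ω => ((X ω, Y ω), Z ω)) fun v =>
    log (pmass μ (fun ω => ((X ω, Y ω), Z ω)) v) + log (pmass μ Z v.2)
      - log (pmass μ (fun ω => (X ω, Z ω)) (v.1.1, v.2))
      - log (pmass μ (fun ω => (Y ω, Z ω)) (v.1.2, v.2))
  simp only [Fintype.sum_prod_type] at h
  simp only [jointPmf]
  rw [h]
  simp only [condMutualInfo, entropy_eq_neg_sum, mul_sub, mul_add,
    Finset.sum_add_distrib, Finset.sum_sub_distrib]
  ring

end Pmf

theorem mul_log_div_eq_klFun {p q : ℝ} (hq : q ≠ 0) :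
    p * log (p / q) = q * klFun (p / q) + (p - q) := by
  rw [klFun]
  field_simp
  ring

section CondIndepLaw

variable {α β γ : Type*} [Fintype α] [Fintype β]

theorem sum_sum_sum_comm [Fintype γ] (f : α → β → γ → ℝ) :
    ∑ a, ∑ b, ∑ c, f a b c = ∑ c, ∑ a, ∑ b, f a b c :=
  (Finset.sum_congr rfl fun _ _ => Finset.sum_comm).trans Finset.sum_comm

theorem sum_sum_sum_eq_zero_iff_of_nonneg [Fintype γ] {f : α → β → γ → ℝ}
    (hf : ∀ a b c, 0 ≤ f a b c) :
    ∑ a, ∑ b, ∑ c, f a b c = 0 ↔ ∀ a b c, f a b c = 0 := by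
  rw [Finset.sum_eq_zero_iff_of_nonneg fun a _ => Finset.sum_nonneg fun b _ =>
    Finset.sum_nonneg fun c _ => hf a b c]
  refine forall_congr' fun a => ?_
  rw [Finset.sum_eq_zero_iff_of_nonneg fun b _ => Finset.sum_nonneg fun c _ => hf a b c]
  simp [Finset.sum_eq_zero_iff_of_nonneg, hf]

variable (P : α → β → γ → ℝ)

/-- `P(a,c) P(b,c) / P(c)`: the law with the `(A,C)`- and `(B,C)`-marginals of `P` under which
`A` and `B` are conditionally independent given `C`. -/
noncomputable def condIndepLaw (a : α) (b : β) (c : γ) : ℝ :=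
  (∑ b', P a b' c) * (∑ a', P a' b c) / ∑ a', ∑ b', P a' b' c

theorem sum_condIndepLaw [Fintype γ] :
    ∑ a, ∑ b, ∑ c, condIndepLaw P a b c = ∑ a, ∑ b, ∑ c, P a b c := by
  rw [sum_sum_sum_comm, sum_sum_sum_comm P]
  refine Finset.sum_congr rfl fun c _ => ?_
  simp only [condIndepLaw, ← Finset.sum_div, ← Finset.mul_sum, ← Finset.sum_mul]
  rw [Finset.sum_comm (f := fun b a => P a b c)]
  exact mul_self_div_self _

variable {P} (hP : ∀ a b c, 0 ≤ P a b c)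
include hP

theorem sum_pos_of_pos {a : α} {b : β} {c : γ} (h : 0 < P a b c) :
    0 < ∑ b', P a b' c ∧ 0 < ∑ a', P a' b c ∧ 0 < ∑ a', ∑ b', P a' b' c := by
  have hac := h.trans_le (Finset.single_le_sum (fun b' _ => hP a b' c) (Finset.mem_univ b))
  refine ⟨hac, h.trans_le (Finset.single_le_sum (fun a' _ => hP a' b c) (Finset.mem_univ a)),
    hac.trans_le (Finset.single_le_sum (f := fun a' => ∑ b', P a' b' c)
      (fun a' _ => Finset.sum_nonneg fun b' _ => hP a' b' c) (Finset.mem_univ a))⟩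

theorem condIndepLaw_nonneg (a : α) (b : β) (c : γ) : 0 ≤ condIndepLaw P a b c :=
  div_nonneg (mul_nonneg (Finset.sum_nonneg fun _ _ => hP _ _ _)
    (Finset.sum_nonneg fun _ _ => hP _ _ _))
    (Finset.sum_nonneg fun _ _ => Finset.sum_nonneg fun _ _ => hP _ _ _)

theorem sum_mul_log_eq_sum_klFun [Fintype γ] :
    ∑ a, ∑ b, ∑ c, P a b c * (log (P a b c) + log (∑ a', ∑ b', P a' b' c)
      - log (∑ b', P a b' c) - log (∑ a', P a' b c))
    = ∑ a, ∑ b, ∑ c, condIndepLaw P a b c * klFun (P a b c / condIndepLaw P a b c) := by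
  have hterm : ∀ a b c, P a b c * (log (P a b c) + log (∑ a', ∑ b', P a' b' c)
      - log (∑ b', P a b' c) - log (∑ a', P a' b c))
      = condIndepLaw P a b c * klFun (P a b c / condIndepLaw P a b c)
        + (P a b c - condIndepLaw P a b c) := by
    intro a b c
    rcases (hP a b c).eq_or_lt with h0 | hpos
    · simp [← h0, klFun_zero]
    obtain ⟨hac, hbc, hc⟩ := sum_pos_of_pos hP hpos
    rw [← mul_log_div_eq_klFun (by unfold condIndepLaw; positivity), condIndepLaw,
      log_div hpos.ne' (by positivity), log_div (by positivity) hc.ne',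
      log_mul hac.ne' hbc.ne']
    ring
  simp only [hterm, Finset.sum_add_distrib, Finset.sum_sub_distrib, sum_condIndepLaw, sub_self,
    add_zero]

theorem condIndepLaw_mul_klFun_eq_zero_iff (a : α) (b : β) (c : γ) :
    condIndepLaw P a b c * klFun (P a b c / condIndepLaw P a b c) = 0
      ↔ P a b c = condIndepLaw P a b c := by
  rcases (hP a b c).eq_or_lt with h0 | hpos
  · simp [← h0, klFun_zero, eq_comm]
  have hQ : 0 < condIndepLaw P a b c := by
    obtain ⟨hac, hbc, hc⟩ := sum_pos_of_pos hP hpos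
    unfold condIndepLaw
    positivity
  rw [mul_eq_zero, klFun_eq_zero_iff (div_nonneg (hP a b c) hQ.le), div_eq_one_iff_eq hQ.ne']
  simp [hQ.ne']

theorem eq_condIndepLaw_iff_exists_mul :
    (∀ a b c, P a b c = condIndepLaw P a b c) ↔ ∃ (f : α → γ → ℝ) (g : β → γ → ℝ),
      ∀ a b c, P a b c = f a c * g b c := by
  refine ⟨fun h => ⟨fun a c => ∑ b', P a b' c,
    fun b c => (∑ a', P a' b c) / ∑ a', ∑ b', P a' b' c, fun a b c => ?_⟩, ?_⟩
  · rw [h, condIndepLaw, mul_div_assoc]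
  rintro ⟨f, g, hfg⟩ a b c
  have hc : ∑ a', ∑ b', P a' b' c = (∑ a', f a' c) * ∑ b', g b' c := by
    simp only [hfg, ← Finset.mul_sum, Finset.sum_mul]
  by_cases hc0 : ∑ a', ∑ b', P a' b' c = 0
  · rw [condIndepLaw, hc0, div_zero]
    exact ((hP a b c).eq_or_lt.resolve_right fun h => (sum_pos_of_pos hP h).2.2.ne' hc0).symm
  obtain ⟨hF, hG⟩ := mul_ne_zero_iff.mp (hc ▸ hc0)
  simp only [condIndepLaw, hfg, ← Finset.mul_sum, ← Finset.sum_mul]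
  field_simp

end CondIndepLaw

section CondMutualInfo

variable {Ω α β γ : Type*} [Fintype Ω] [Fintype α] [DecidableEq α] [Fintype β] [DecidableEq β]
  [Fintype γ] [DecidableEq γ] {μ : Ω → ℝ} {X : Ω → α} {Y : Ω → β} {Z : Ω → γ}

theorem condMutualInfo_eq_sum_klFun (hμ : ∀ ω, 0 ≤ μ ω) :
    condMutualInfo μ X Y Z = ∑ a, ∑ b, ∑ c, condIndepLaw (jointPmf μ X Y Z) a b c *
      klFun (jointPmf μ X Y Z a b c / condIndepLaw (jointPmf μ X Y Z) a b c) := by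
  rw [condMutualInfo_eq_sum_mul_log,
    ← sum_mul_log_eq_sum_klFun (P := jointPmf μ X Y Z) fun a b c => pmass_nonneg hμ _ _]
  simp only [pmass_prod_left_eq_sum_jointPmf μ X Y Z, pmass_prod_right_eq_sum_jointPmf μ X Y Z,
    pmass_eq_sum_sum_jointPmf μ X Y Z]

theorem condMutualInfo_nonneg (hμ : ∀ ω, 0 ≤ μ ω) : 0 ≤ condMutualInfo μ X Y Z := by
  have hP a b c : 0 ≤ jointPmf μ X Y Z a b c := pmass_nonneg hμ _ _
  rw [condMutualInfo_eq_sum_klFun hμ]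
  exact Finset.sum_nonneg fun a _ => Finset.sum_nonneg fun b _ => Finset.sum_nonneg fun c _ =>
    mul_nonneg (condIndepLaw_nonneg hP a b c) (klFun_nonneg (div_nonneg (hP a b c)
      (condIndepLaw_nonneg hP a b c)))

theorem condMutualInfo_eq_zero_iff (hμ : ∀ ω, 0 ≤ μ ω) :
    condMutualInfo μ X Y Z = 0 ↔ ∃ (f : α → γ → ℝ) (g : β → γ → ℝ),
      ∀ a b c, jointPmf μ X Y Z a b c = f a c * g b c := by
  have hP a b c : 0 ≤ jointPmf μ X Y Z a b c := pmass_nonneg hμ _ _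
  rw [condMutualInfo_eq_sum_klFun hμ, sum_sum_sum_eq_zero_iff_of_nonneg fun a b c =>
    mul_nonneg (condIndepLaw_nonneg hP a b c) (klFun_nonneg (div_nonneg (hP a b c)
      (condIndepLaw_nonneg hP a b c))), ← eq_condIndepLaw_iff_exists_mul hP]
  simp only [condIndepLaw_mul_klFun_eq_zero_iff hP]

end CondMutualInfo

section ChainRule

variable {Z : Type*} [Fintype Z] [DecidableEq Z] {n : ℕ}

theorem filter_val_lt_succ_eq_insert (i : Fin n) :
    ({j : Fin n | j.val < i.val + 1} : Finset (Fin n))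
      = insert i ({j : Fin n | j.val < i.val} : Finset (Fin n)) := by
  ext j
  simp only [Finset.mem_filter, Finset.mem_univ, true_and, Finset.mem_insert, Fin.ext_iff]
  omega

theorem sum_prod_eq_prod_of_causal (g : Fin n → (Fin n → Z) → ℝ)
    (hg : ∀ j s t, (∀ k ≤ j, s k = t k) → g j s = g j t)
    (hg1 : ∀ j t, ∑ z, g j (Function.update t j z) = 1) {m : ℕ} (hm : m ≤ n) (t : Fin n → Z) :
    ∑ s with ∀ k : Fin n, (k : ℕ) < m → s k = t k, ∏ j, g j s
      = ∏ j : Fin n with j.val < m, g j t := by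
  induction hm using Nat.decreasingInduction generalizing t with
  | self =>
    have hS : ({s | ∀ k : Fin n, (k : ℕ) < n → s k = t k} : Finset (Fin n → Z)) = {t} := by
      ext s
      simp [funext_iff]
    rw [hS, Finset.sum_singleton, Finset.filter_true_of_mem fun j _ => j.isLt]
  | of_succ m hm ih =>
    let i : Fin n := ⟨m, hm⟩
    have hfiber (z : Z) :
        ({s : Fin n → Z | ∀ k : Fin n, (k : ℕ) < m → s k = t k} : Finset _).filter (· i = z)
          = ({s : Fin n → Z | ∀ k : Fin n, (k : ℕ) < m + 1 → s k = Function.update t i z k} :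
            Finset _) := by
      ext s
      simp only [Finset.mem_filter, Finset.mem_univ, true_and]
      constructor
      · rintro ⟨hs, rfl⟩ k hk
        rcases (Nat.lt_succ_iff_lt_or_eq.mp hk) with hk | hk
        · rw [Function.update_of_ne (Fin.ne_of_val_ne hk.ne), hs k hk]
        · obtain rfl : k = i := Fin.ext hk
          simp
      · intro hs
        refine ⟨fun k hk => ?_, by simpa using hs i (Nat.lt_succ_self m)⟩
        rw [hs k (Nat.lt_succ_of_lt hk), Function.update_of_ne (Fin.ne_of_val_ne hk.ne)]
    calc ∑ s with ∀ k : Fin n, (k : ℕ) < m → s k = t k, ∏ j, g j s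
        = ∑ z, ∏ j : Fin n with j.val < m + 1, g j (Function.update t i z) := by
          rw [← Finset.sum_fiberwise _ (fun s => s i)]
          simp only [hfiber, ih]
      _ = ∑ z, g i (Function.update t i z) * ∏ j : Fin n with j.val < m, g j t := by
          refine Finset.sum_congr rfl fun z _ => ?_
          rw [filter_val_lt_succ_eq_insert i, Finset.prod_insert (by simp [i])]
          congr 1
          refine Finset.prod_congr rfl fun j hj => hg j _ _ fun k hk => ?_
          have hji : j < i := Fin.lt_def.mpr (Finset.mem_filter.mp hj).2
          exact Function.update_of_ne (hk.trans_lt hji).ne _ _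
      _ = ∏ j : Fin n with j.val < m, g j t := by rw [← Finset.sum_mul, hg1, one_mul]

end ChainRule

theorem comp_castLE_eq_iff {α : Type*} {m n : ℕ} (h : m ≤ n) {f g : Fin n → α} :
    f ∘ Fin.castLE h = g ∘ Fin.castLE h ↔ ∀ k : Fin n, (k : ℕ) < m → f k = g k :=
  ⟨fun H k hk => congrFun H ⟨k, hk⟩, fun H => funext fun j => H _ j.isLt⟩

section Channel

variable {𝒳₁ 𝒳₂ 𝒴 : Type*} {n : ℕ}
  {q₁ : Fin n → (Fin n → 𝒳₁) → (Fin n → 𝒴) → 𝒳₁ → ℝ}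
  {q₂ : Fin n → (Fin n → 𝒳₂) → (Fin n → 𝒴) → 𝒳₂ → ℝ}
  {p : Fin n → (Fin n → 𝒳₁) → (Fin n → 𝒳₂) → (Fin n → 𝒴) → 𝒴 → ℝ}

/-- The inputs `(X₁^i, X₂^i)`, with `i` included. -/
def inputPrefix (i : Fin n) (t : (Fin n → 𝒳₁) × (Fin n → 𝒳₂) × (Fin n → 𝒴)) :
    (Fin ((i : ℕ) + 1) → 𝒳₁) × (Fin ((i : ℕ) + 1) → 𝒳₂) :=
  (t.1 ∘ Fin.castLE i.isLt, t.2.1 ∘ Fin.castLE i.isLt)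

/-- The past outputs `Y^{i-1}`. -/
def outputPast (i : Fin n) (t : (Fin n → 𝒳₁) × (Fin n → 𝒳₂) × (Fin n → 𝒴)) :
    Fin (i : ℕ) → 𝒴 :=
  t.2.2 ∘ Fin.castLE i.isLt.le

theorem prefixKey_eq_iff (i : Fin n) (s t : (Fin n → 𝒳₁) × (Fin n → 𝒳₂) × (Fin n → 𝒴)) :
    ((inputPrefix i s, s.2.2 i), outputPast i s) = ((inputPrefix i t, t.2.2 i), outputPast i t)
      ↔ ∀ k : Fin n, (k : ℕ) < i + 1 → (s.1 k, s.2.1 k, s.2.2 k) = (t.1 k, t.2.1 k, t.2.2 k) := by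
  simp only [inputPrefix, outputPast, Prod.mk.injEq, comp_castLE_eq_iff]
  constructor
  · rintro ⟨⟨⟨h₁, h₂⟩, hi⟩, hy⟩ k hk
    refine ⟨h₁ k hk, h₂ k hk, ?_⟩
    rcases Nat.lt_succ_iff_lt_or_eq.mp hk with hk | hk
    · exact hy k hk
    · rwa [Fin.ext hk]
  · intro h
    exact ⟨⟨⟨fun k hk => (h k hk).1, fun k hk => (h k hk).2.1⟩, (h i i.val.lt_succ_self).2.2⟩,
      fun k hk => (h k (Nat.lt_succ_of_lt hk)).2.2⟩

theorem exists_prefixKey_eq [Nonempty 𝒳₁] [Nonempty 𝒳₂] [Nonempty 𝒴] (i : Fin n)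
    (a : (Fin ((i : ℕ) + 1) → 𝒳₁) × (Fin ((i : ℕ) + 1) → 𝒳₂)) (b : 𝒴) (c : Fin (i : ℕ) → 𝒴) :
    ∃ t : (Fin n → 𝒳₁) × (Fin n → 𝒳₂) × (Fin n → 𝒴),
      inputPrefix i t = a ∧ t.2.2 i = b ∧ outputPast i t = c := by
  obtain ⟨a₁, a₂⟩ := a
  obtain ⟨x₁, rfl⟩ := (Fin.castLE_injective i.isLt).surjective_comp_right a₁
  obtain ⟨x₂, rfl⟩ := (Fin.castLE_injective i.isLt).surjective_comp_right a₂
  obtain ⟨y, hy⟩ := (Fin.castLE_injective i.isLt).surjective_comp_right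
    (Fin.snoc (α := fun _ => 𝒴) c b)
  refine ⟨(x₁, x₂, y), rfl, ?_, funext fun j => ?_⟩
  · exact (congrFun hy (Fin.last i)).trans (Fin.snoc_last _ _)
  · exact (congrFun hy j.castSucc).trans (Fin.snoc_castSucc _ _ _)

def IsCausalChannel [Fintype 𝒴]
    (p : Fin n → (Fin n → 𝒳₁) → (Fin n → 𝒳₂) → (Fin n → 𝒴) → 𝒴 → ℝ) : Prop :=
  (∀ i x₁ x₂ y b, 0 ≤ p i x₁ x₂ y b) ∧ (∀ i x₁ x₂ y, ∑ b, p i x₁ x₂ y b = 1) ∧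
    ∀ i : Fin n, ∀ x₁ x₁' x₂ x₂' y y',
      (∀ j : Fin n, (j : ℕ) ≤ (i : ℕ) → x₁ j = x₁' j) →
      (∀ j : Fin n, (j : ℕ) ≤ (i : ℕ) → x₂ j = x₂' j) →
      (∀ j : Fin n, (j : ℕ) < (i : ℕ) → y j = y' j) →
      p i x₁ x₂ y = p i x₁' x₂' y'

def inputFactor (q₁ : Fin n → (Fin n → 𝒳₁) → (Fin n → 𝒴) → 𝒳₁ → ℝ)
    (q₂ : Fin n → (Fin n → 𝒳₂) → (Fin n → 𝒴) → 𝒳₂ → ℝ) (j : Fin n)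
    (t : (Fin n → 𝒳₁) × (Fin n → 𝒳₂) × (Fin n → 𝒴)) : ℝ :=
  q₁ j t.1 t.2.2 (t.1 j) * q₂ j t.2.1 t.2.2 (t.2.1 j)

def channelFactor (p : Fin n → (Fin n → 𝒳₁) → (Fin n → 𝒳₂) → (Fin n → 𝒴) → 𝒴 → ℝ) (j : Fin n)
    (t : (Fin n → 𝒳₁) × (Fin n → 𝒳₂) × (Fin n → 𝒴)) : ℝ :=
  p j t.1 t.2.1 t.2.2 (t.2.2 j)

theorem inducedLaw_nonneg [Fintype 𝒳₁] [Fintype 𝒳₂] [Fintype 𝒴] (hq₁ : IsStrategy q₁)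
    (hq₂ : IsStrategy q₂) (hp : IsCausalChannel p)
    (t : (Fin n → 𝒳₁) × (Fin n → 𝒳₂) × (Fin n → 𝒴)) : 0 ≤ inducedLaw q₁ q₂ p t :=
  Finset.prod_nonneg fun _ _ => mul_nonneg (mul_nonneg (hq₁.1 ..) (hq₂.1 ..)) (hp.1 ..)

theorem inputFactor_congr [Fintype 𝒳₁] [Fintype 𝒳₂] (hq₁ : IsStrategy q₁) (hq₂ : IsStrategy q₂)
    {j : Fin n} {s t : (Fin n → 𝒳₁) × (Fin n → 𝒳₂) × (Fin n → 𝒴)}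
    (hx₁ : ∀ k : Fin n, (k : ℕ) ≤ j → s.1 k = t.1 k)
    (hx₂ : ∀ k : Fin n, (k : ℕ) ≤ j → s.2.1 k = t.2.1 k)
    (hy : ∀ k : Fin n, (k : ℕ) < j → s.2.2 k = t.2.2 k) :
    inputFactor q₁ q₂ j s = inputFactor q₁ q₂ j t := by
  rw [inputFactor, inputFactor, hq₁.2.2 j _ _ _ _ (fun k hk => hx₁ k hk.le) hy,
    hq₂.2.2 j _ _ _ _ (fun k hk => hx₂ k hk.le) hy, hx₁ j le_rfl, hx₂ j le_rfl]

theorem channelFactor_congr [Fintype 𝒴] (hp : IsCausalChannel p) {j : Fin n}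
    {s t : (Fin n → 𝒳₁) × (Fin n → 𝒳₂) × (Fin n → 𝒴)}
    (hx₁ : ∀ k : Fin n, (k : ℕ) ≤ j → s.1 k = t.1 k)
    (hx₂ : ∀ k : Fin n, (k : ℕ) ≤ j → s.2.1 k = t.2.1 k)
    (hy : ∀ k : Fin n, (k : ℕ) ≤ j → s.2.2 k = t.2.2 k) :
    channelFactor p j s = channelFactor p j t := by
  rw [channelFactor, channelFactor, hp.2.2 j _ _ _ _ _ _ hx₁ hx₂ (fun k hk => hy k hk.le),
    hy j le_rfl]

theorem prod_inputFactor_congr [Fintype 𝒳₁] [Fintype 𝒳₂] (hq₁ : IsStrategy q₁)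
    (hq₂ : IsStrategy q₂) {i : Fin n} {s t : (Fin n → 𝒳₁) × (Fin n → 𝒳₂) × (Fin n → 𝒴)}
    (ha : inputPrefix i s = inputPrefix i t) (hc : outputPast i s = outputPast i t) :
    ∏ j ∈ Finset.Iic i, inputFactor q₁ q₂ j s = ∏ j ∈ Finset.Iic i, inputFactor q₁ q₂ j t := by
  simp only [inputPrefix, outputPast, Prod.mk.injEq, comp_castLE_eq_iff] at ha hc
  refine Finset.prod_congr rfl fun j hj => ?_
  have hji : (j : ℕ) ≤ i := Fin.le_def.mp (Finset.mem_Iic.mp hj)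
  exact inputFactor_congr hq₁ hq₂ (fun k _ => ha.1 k (by omega)) (fun k _ => ha.2 k (by omega))
    fun k _ => hc k (by omega)

theorem update_apply_of_val_lt {α : Type*} (x : Fin n → α) (v : α) {j k : Fin n}
    (hk : (k : ℕ) < j) : Function.update x j v k = x k :=
  Function.update_of_ne (Fin.ne_of_val_ne hk.ne) _ _

theorem sum_inputFactor_mul_channelFactor_update [Fintype 𝒳₁] [Fintype 𝒳₂] [Fintype 𝒴]
    (hq₁ : IsStrategy q₁) (hq₂ : IsStrategy q₂) (hp : IsCausalChannel p) (j : Fin n)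
    (x₁ : Fin n → 𝒳₁) (x₂ : Fin n → 𝒳₂) (y : Fin n → 𝒴) :
    ∑ a, ∑ b, ∑ c,
      inputFactor q₁ q₂ j (Function.update x₁ j a, Function.update x₂ j b, Function.update y j c)
        * channelFactor p j (Function.update x₁ j a, Function.update x₂ j b, Function.update y j c)
      = 1 := by
  have h₁ a c : q₁ j (Function.update x₁ j a) (Function.update y j c) = q₁ j x₁ y :=
    hq₁.2.2 j _ _ _ _ (fun _ => update_apply_of_val_lt _ _) (fun _ => update_apply_of_val_lt _ _)
  have h₂ b c : q₂ j (Function.update x₂ j b) (Function.update y j c) = q₂ j x₂ y :=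
    hq₂.2.2 j _ _ _ _ (fun _ => update_apply_of_val_lt _ _) (fun _ => update_apply_of_val_lt _ _)
  have h₃ a b c : p j (Function.update x₁ j a) (Function.update x₂ j b) (Function.update y j c)
      = p j (Function.update x₁ j a) (Function.update x₂ j b) y :=
    hp.2.2 j _ _ _ _ _ _ (fun _ _ => rfl) (fun _ _ => rfl) fun _ => update_apply_of_val_lt _ _
  simp only [inputFactor, channelFactor, Function.update_self, h₁, h₂, h₃, ← Finset.mul_sum,
    hp.2.1, mul_one, hq₁.2.1, hq₂.2.1]

def seqEquiv : (Fin n → 𝒳₁ × 𝒳₂ × 𝒴) ≃ (Fin n → 𝒳₁) × (Fin n → 𝒳₂) × (Fin n → 𝒴) where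
  toFun f := (fun k => (f k).1, fun k => (f k).2.1, fun k => (f k).2.2)
  invFun t k := (t.1 k, t.2.1 k, t.2.2 k)
  left_inv _ := rfl
  right_inv _ := rfl

theorem seqEquiv_update (f : Fin n → 𝒳₁ × 𝒳₂ × 𝒴) (j : Fin n) (z : 𝒳₁ × 𝒳₂ × 𝒴) :
    seqEquiv (Function.update f j z) = (Function.update (seqEquiv f).1 j z.1,
      Function.update (seqEquiv f).2.1 j z.2.1, Function.update (seqEquiv f).2.2 j z.2.2) := by
  simp only [seqEquiv, Equiv.coe_fn_mk, Prod.mk.injEq]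
  refine ⟨funext fun k => ?_, funext fun k => ?_, funext fun k => ?_⟩ <;>
    by_cases hk : k = j <;> simp [hk]

end Channel

section PrefixLaw

variable {𝒳₁ 𝒳₂ 𝒴 : Type*} [Fintype 𝒳₁] [DecidableEq 𝒳₁] [Fintype 𝒳₂] [DecidableEq 𝒳₂]
  [Fintype 𝒴] [DecidableEq 𝒴] {n : ℕ}
  {q₁ u₁ : Fin n → (Fin n → 𝒳₁) → (Fin n → 𝒴) → 𝒳₁ → ℝ}
  {q₂ u₂ : Fin n → (Fin n → 𝒳₂) → (Fin n → 𝒴) → 𝒳₂ → ℝ}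
  {p : Fin n → (Fin n → 𝒳₁) → (Fin n → 𝒳₂) → (Fin n → 𝒴) → 𝒴 → ℝ}

theorem directedInfo_eq_sum (μ : (Fin n → 𝒳₁) × (Fin n → 𝒳₂) × (Fin n → 𝒴) → ℝ) :
    directedInfo μ
      = ∑ i, condMutualInfo μ (inputPrefix i) (fun t => t.2.2 i) (outputPast i) :=
  rfl

theorem jointPmf_inducedLaw (hq₁ : IsStrategy q₁) (hq₂ : IsStrategy q₂) (hp : IsCausalChannel p)
    (i : Fin n) (s : (Fin n → 𝒳₁) × (Fin n → 𝒳₂) × (Fin n → 𝒴)) :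
    jointPmf (inducedLaw q₁ q₂ p) (inputPrefix i) (fun t => t.2.2 i) (outputPast i)
      (inputPrefix i s) (s.2.2 i) (outputPast i s)
      = ∏ j ∈ Finset.Iic i, inputFactor q₁ q₂ j s * channelFactor p j s := by
  let g (j : Fin n) (f : Fin n → 𝒳₁ × 𝒳₂ × 𝒴) : ℝ :=
    inputFactor q₁ q₂ j (seqEquiv f) * channelFactor p j (seqEquiv f)
  have hg (j : Fin n) (f f' : Fin n → 𝒳₁ × 𝒳₂ × 𝒴)
      (h : ∀ k ≤ j, f k = f' k) : g j f = g j f' := by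
    have h₁ k hk : (f k).1 = (f' k).1 := congrArg Prod.fst (h k hk)
    have h₂ k hk : (f k).2.1 = (f' k).2.1 := congrArg (·.2.1) (h k hk)
    have h₃ k hk : (f k).2.2 = (f' k).2.2 := congrArg (·.2.2) (h k hk)
    exact congrArg₂ (· * ·) (inputFactor_congr hq₁ hq₂ h₁ h₂ fun k hk => h₃ k hk.le)
      (channelFactor_congr hp h₁ h₂ h₃)
  have hg1 (j : Fin n) (f : Fin n → 𝒳₁ × 𝒳₂ × 𝒴) : ∑ z, g j (Function.update f j z) = 1 := by
    simpa only [g, seqEquiv_update, Fintype.sum_prod_type] using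
      sum_inputFactor_mul_channelFactor_update hq₁ hq₂ hp j (seqEquiv f).1 (seqEquiv f).2.1
        (seqEquiv f).2.2
  have hIic : Finset.Iic i = ({j : Fin n | j.val < i.val + 1} : Finset (Fin n)) := by
    ext j
    simp only [Finset.mem_Iic, Finset.mem_filter, Finset.mem_univ, true_and, Fin.le_def]
    omega
  rw [hIic]
  refine Eq.trans ?_ (sum_prod_eq_prod_of_causal g hg hg1 (m := i + 1) i.isLt (seqEquiv.symm s))
  rw [jointPmf, pmass, ← seqEquiv.sum_comp, Finset.sum_filter]
  exact Finset.sum_congr rfl fun f _ => if_congr (prefixKey_eq_iff i (seqEquiv f) s) rfl rfl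

theorem exists_jointPmf_inducedLaw_eq_mul [Nonempty 𝒳₁] [Nonempty 𝒳₂] [Nonempty 𝒴]
    (hq₁ : IsStrategy q₁) (hq₂ : IsStrategy q₂) (hu₁ : IsStrategy u₁) (hu₂ : IsStrategy u₂)
    (hu₁_pos : ∀ i x y a, 0 < u₁ i x y a) (hu₂_pos : ∀ i x y a, 0 < u₂ i x y a)
    (hp : IsCausalChannel p) (i : Fin n) :
    ∃ w : (Fin ((i : ℕ) + 1) → 𝒳₁) × (Fin ((i : ℕ) + 1) → 𝒳₂) → (Fin (i : ℕ) → 𝒴) → ℝ,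
      ∀ a b c,
        jointPmf (inducedLaw q₁ q₂ p) (inputPrefix i) (fun t => t.2.2 i) (outputPast i) a b c
          = w a c * jointPmf (inducedLaw u₁ u₂ p) (inputPrefix i) (fun t => t.2.2 i)
            (outputPast i) a b c := by
  suffices h : ∀ a c, ∃ r : ℝ, ∀ b,
      jointPmf (inducedLaw q₁ q₂ p) (inputPrefix i) (fun t => t.2.2 i) (outputPast i) a b c
        = r * jointPmf (inducedLaw u₁ u₂ p) (inputPrefix i) (fun t => t.2.2 i) (outputPast i)
          a b c by
    choose w hw using h
    exact ⟨w, fun a b c => hw a c b⟩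
  intro a c
  obtain ⟨s₀, ha₀, -, hc₀⟩ := exists_prefixKey_eq i a (Classical.arbitrary 𝒴) c
  have hpos : 0 < ∏ j ∈ Finset.Iic i, inputFactor u₁ u₂ j s₀ :=
    Finset.prod_pos fun j _ => mul_pos (hu₁_pos ..) (hu₂_pos ..)
  refine ⟨(∏ j ∈ Finset.Iic i, inputFactor q₁ q₂ j s₀)
    / ∏ j ∈ Finset.Iic i, inputFactor u₁ u₂ j s₀, fun b => ?_⟩
  obtain ⟨s, ha, rfl, hc⟩ := exists_prefixKey_eq i a b c
  rw [← ha, ← hc, jointPmf_inducedLaw hq₁ hq₂ hp, jointPmf_inducedLaw hu₁ hu₂ hp,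
    Finset.prod_mul_distrib, Finset.prod_mul_distrib,
    prod_inputFactor_congr hq₁ hq₂ (ha.trans ha₀.symm) (hc.trans hc₀.symm),
    prod_inputFactor_congr hu₁ hu₂ (ha.trans ha₀.symm) (hc.trans hc₀.symm)]
  field_simp

end PrefixLaw

section Uniform

variable (𝒳 𝒴 : Type*) [Fintype 𝒳] (n : ℕ)

noncomputable def uniformStrategy : Fin n → (Fin n → 𝒳) → (Fin n → 𝒴) → 𝒳 → ℝ :=
  fun _ _ _ _ => (Fintype.card 𝒳 : ℝ)⁻¹

theorem uniformStrategy_pos [Nonempty 𝒳] (i : Fin n) (x : Fin n → 𝒳) (y : Fin n → 𝒴) (a : 𝒳) :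
    0 < uniformStrategy 𝒳 𝒴 n i x y a := by
  simp [uniformStrategy, Fintype.card_pos]

theorem isStrategy_uniformStrategy [Nonempty 𝒳] : IsStrategy (uniformStrategy 𝒳 𝒴 n) :=
  ⟨fun i x y a => (uniformStrategy_pos 𝒳 𝒴 n i x y a).le,
    fun _ _ _ => by simp [uniformStrategy], fun _ _ _ _ _ _ _ => rfl⟩

theorem noFeedback_uniformStrategy : NoFeedback (uniformStrategy 𝒳 𝒴 n) :=
  fun _ _ _ _ => rfl

end Uniform

theorem directedInfo_zero_of_zero_without_feedback_general
    {𝒳₁ 𝒳₂ 𝒴 : Type*}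
    [Fintype 𝒳₁] [DecidableEq 𝒳₁] [Nonempty 𝒳₁]
    [Fintype 𝒳₂] [DecidableEq 𝒳₂] [Nonempty 𝒳₂]
    [Fintype 𝒴] [DecidableEq 𝒴] [Nonempty 𝒴]
    {n : ℕ}
    (p : Fin n → (Fin n → 𝒳₁) → (Fin n → 𝒳₂) → (Fin n → 𝒴) → 𝒴 → ℝ)
    (hp0 : ∀ i x₁ x₂ y b, 0 ≤ p i x₁ x₂ y b)
    (hp1 : ∀ i x₁ x₂ y, ∑ b, p i x₁ x₂ y b = 1)
    (hpCausal : ∀ i : Fin n, ∀ x₁ x₁' x₂ x₂' y y',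
      (∀ j : Fin n, (j : ℕ) ≤ (i : ℕ) → x₁ j = x₁' j) →
      (∀ j : Fin n, (j : ℕ) ≤ (i : ℕ) → x₂ j = x₂' j) →
      (∀ j : Fin n, (j : ℕ) < (i : ℕ) → y j = y' j) →
      p i x₁ x₂ y = p i x₁' x₂' y')
    (hzero : ∀ (q₁ : Fin n → (Fin n → 𝒳₁) → (Fin n → 𝒴) → 𝒳₁ → ℝ)
      (q₂ : Fin n → (Fin n → 𝒳₂) → (Fin n → 𝒴) → 𝒳₂ → ℝ),
      IsStrategy q₁ → IsStrategy q₂ → NoFeedback q₁ → NoFeedback q₂ →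
      directedInfo (inducedLaw q₁ q₂ p) = 0) :
    ∀ (q₁ : Fin n → (Fin n → 𝒳₁) → (Fin n → 𝒴) → 𝒳₁ → ℝ)
      (q₂ : Fin n → (Fin n → 𝒳₂) → (Fin n → 𝒴) → 𝒳₂ → ℝ),
      IsStrategy q₁ → IsStrategy q₂ →
      directedInfo (inducedLaw q₁ q₂ p) = 0 := by
  intro q₁ q₂ hq₁ hq₂
  have hp : IsCausalChannel p := ⟨hp0, hp1, hpCausal⟩
  have hu₁ := isStrategy_uniformStrategy 𝒳₁ 𝒴 n
  have hu₂ := isStrategy_uniformStrategy 𝒳₂ 𝒴 n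
  have hu := hzero _ _ hu₁ hu₂ (noFeedback_uniformStrategy _ _ _)
    (noFeedback_uniformStrategy _ _ _)
  rw [directedInfo_eq_sum, Finset.sum_eq_zero_iff_of_nonneg fun i _ =>
    condMutualInfo_nonneg (inducedLaw_nonneg hu₁ hu₂ hp)] at hu
  rw [directedInfo_eq_sum]
  refine Finset.sum_eq_zero fun i hi => ?_
  obtain ⟨f, g, hfg⟩ := (condMutualInfo_eq_zero_iff (inducedLaw_nonneg hu₁ hu₂ hp)).1 (hu i hi)
  obtain ⟨w, hw⟩ := exists_jointPmf_inducedLaw_eq_mul hq₁ hq₂ hu₁ hu₂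
    (uniformStrategy_pos 𝒳₁ 𝒴 n) (uniformStrategy_pos 𝒳₂ 𝒴 n) hp i
  exact (condMutualInfo_eq_zero_iff (inducedLaw_nonneg hq₁ hq₂ hp)).2
    ⟨fun a c => w a c * f a c, g, fun a b c => by rw [hw, hfg, mul_assoc]⟩

/-- If the directed information `I(X₁^n, X₂^n → Y^n)` of a causal channel `p` vanishes under
every pair of non-feedback input strategies (product input distributions `Q(x₁^n)Q(x₂^n)`),
then it also vanishes under every pair of causal, feedback-dependent input strategies
`Q(x₁^n ‖ y^{n-1}) Q(x₂^n ‖ y^{n-1})`. -/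
theorem directedInfo_zero_of_zero_without_feedback
    {𝒳₁ 𝒳₂ 𝒴 : Type*}
    [Fintype 𝒳₁] [DecidableEq 𝒳₁] [Nonempty 𝒳₁]
    [Fintype 𝒳₂] [DecidableEq 𝒳₂] [Nonempty 𝒳₂]
    [Fintype 𝒴] [DecidableEq 𝒴] [Nonempty 𝒴]
    {n : ℕ} (hn : 1 ≤ n)
    (p : Fin n → (Fin n → 𝒳₁) → (Fin n → 𝒳₂) → (Fin n → 𝒴) → 𝒴 → ℝ)
    (hp0 : ∀ i x₁ x₂ y b, 0 ≤ p i x₁ x₂ y b)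
    (hp1 : ∀ i x₁ x₂ y, ∑ b, p i x₁ x₂ y b = 1)
    (hpCausal : ∀ i : Fin n, ∀ x₁ x₁' x₂ x₂' y y',
      (∀ j : Fin n, (j : ℕ) ≤ (i : ℕ) → x₁ j = x₁' j) →
      (∀ j : Fin n, (j : ℕ) ≤ (i : ℕ) → x₂ j = x₂' j) →
      (∀ j : Fin n, (j : ℕ) < (i : ℕ) → y j = y' j) →
      p i x₁ x₂ y = p i x₁' x₂' y')
    (hzero : ∀ (q₁ : Fin n → (Fin n → 𝒳₁) → (Fin n → 𝒴) → 𝒳₁ → ℝ)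
      (q₂ : Fin n → (Fin n → 𝒳₂) → (Fin n → 𝒴) → 𝒳₂ → ℝ),
      IsStrategy q₁ → IsStrategy q₂ → NoFeedback q₁ → NoFeedback q₂ →
      directedInfo (inducedLaw q₁ q₂ p) = 0) :
    ∀ (q₁ : Fin n → (Fin n → 𝒳₁) → (Fin n → 𝒴) → 𝒳₁ → ℝ)
      (q₂ : Fin n → (Fin n → 𝒳₂) → (Fin n → 𝒴) → 𝒳₂ → ℝ),
      IsStrategy q₁ → IsStrategy q₂ →
      directedInfo (inducedLaw q₁ q₂ p) = 0 :=
  directedInfo_zero_of_zero_without_feedback_general p hp0 hp1 hpCausal hzero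
end

section
/- Consider the additive mod-q multiple access channel with feedback: let q ≥ 1, n ≥ 1, let W₁, W₂ (the messages, taking values in finite sets) and V = (V_1,…,V_n) with V_i ∈ ℤ/qℤ be random variables on a common probability space such that V^n is independent of (W₁, W₂); let X_{l,i} = g_{l,i}(W_l, Y^{i−1}) ∈ ℤ/qℤ for deterministic encoding functions g_{l,i} (l = 1,2), and Y_i = X_{1,i} + X_{2,i} + V_i (addition mod q). Then the sum-rate directed information satisfies I((X₁, X₂)^n → Y^n) := ∑_{i=1}^{n} I((X₁^i, X₂^i) ; Y_i | Y^{i−1}) = H(Y^n) − H(V^n). -/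
open Finset

set_option synthInstance.maxSize 1000

/-!
Write `Z^i` for the prefix `Fin.take i Z` of length `i`. Entropy is handled through
`H(X) = -∑ ω, μ ω * log P(X = X ω)`: it only depends on the partition of `Ω` into fibres of `X`,
and an identity between probabilities of atoms becomes an identity between entropies.

Each input depends only on the messages `W` and the past outputs, so by induction the output
prefix `Y^i`, and with it `S_i = (X₁^{i+1}, X₂^{i+1}, Y^i)`, is a function of `(W, V^i)`;
conversely `V^i = Y^i - X₁^i - X₂^i` is a function of `S_i`. As `V` is independent of `W`, the
noise `V_i` is then conditionally independent of `S_i` given `V^i`, i.e.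
`H(S_i, V_i) - H(S_i) = H(V^{i+1}) - H(V^i)`. Since `((X₁^{i+1}, X₂^{i+1}), Y_i, Y^i)` and
`(S_i, V_i)` determine each other, the `i`-th summand equals
`(H(Y^{i+1}) - H(V^{i+1})) - (H(Y^i) - H(V^i))`, and the sum telescopes; the two empty
prefixes have equal entropy.
-/
open Function

namespace Fin

variable {α : Type*} {n : ℕ}

theorem take_eq_take_iff {m : ℕ} (h : m ≤ n) {v w : Fin n → α} :
    take m h v = take m h w ↔ ∀ j : Fin n, (j : ℕ) < m → v j = w j :=
  ⟨fun hvw j hj => congrFun hvw ⟨j, hj⟩, fun hvw => funext fun j => hvw _ j.isLt⟩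

theorem take_succ_eq_take_succ_iff (i : Fin n) {v w : Fin n → α} :
    take (i + 1) i.isLt v = take (i + 1) i.isLt w ↔
      v i = w i ∧ take i i.isLt.le v = take i i.isLt.le w := by
  simp only [take_eq_take_iff, Nat.lt_succ_iff_lt_or_eq, or_imp, forall_and, Fin.val_inj,
    forall_eq]
  exact and_comm

theorem sum_univ_succ_sub_castSucc {M : Type*} [AddCommGroup M] (f : Fin (n + 1) → M) :
    ∑ i : Fin n, (f i.succ - f i.castSucc) = f (last n) - f 0 := by
  induction n with
  | zero => simp
  | succ n ih =>
    rw [sum_univ_castSucc]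
    simp only [succ_castSucc]
    rw [ih (fun i => f i.castSucc)]
    simp only [succ_last, castSucc_zero]
    abel

end Fin

section feedback

variable {Ω α β κ G : Type*} [AddCommGroup G] {n : ℕ} {M : Ω → κ}

theorem factorsThrough_take_succ_of_strictlyCausal {X : Ω → Fin n → α} {Y : Ω → Fin n → β}
    (hX : ∀ i : Fin n, (fun ω => X ω i).FactorsThrough fun ω => (M ω, Fin.take i i.isLt.le (Y ω)))
    (i : Fin n) :
    (fun ω => Fin.take (i + 1) i.isLt (X ω)).FactorsThrough
      fun ω => (M ω, Fin.take i i.isLt.le (Y ω)) := by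
  intro a b hab
  obtain ⟨hM, hY⟩ := Prod.mk_inj.1 hab
  rw [Fin.take_eq_take_iff] at hY ⊢
  intro j hj
  refine hX j (Prod.mk_inj.2 ⟨hM, (Fin.take_eq_take_iff _).2 fun k hk => hY k ?_⟩)
  omega

theorem factorsThrough_take_of_causal {Y : Ω → Fin n → α} {V : Ω → Fin n → β}
    (hY : ∀ i : Fin n,
      (fun ω => Y ω i).FactorsThrough fun ω => (M ω, Fin.take i i.isLt.le (Y ω), V ω i))
    (m : ℕ) (hm : m ≤ n) :
    (fun ω => Fin.take m hm (Y ω)).FactorsThrough fun ω => (M ω, Fin.take m hm (V ω)) := by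
  induction m with
  | zero => exact fun _ _ _ => funext fun j => j.elim0
  | succ m ih =>
    intro a b hab
    obtain ⟨hM, hV⟩ := Prod.mk_inj.1 hab
    obtain ⟨hVm, hV⟩ := (Fin.take_succ_eq_take_succ_iff ⟨m, hm⟩).1 hV
    have hYm := ih (Nat.le_of_succ_le hm) (Prod.mk_inj.2 ⟨hM, hV⟩)
    exact (Fin.take_succ_eq_take_succ_iff ⟨m, hm⟩).2
      ⟨hY ⟨m, hm⟩ (by simp only [hM, hYm, hVm]), hYm⟩

def feedbackState (X₁ X₂ Y : Ω → Fin n → G) (i : Fin n) (ω : Ω) :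
    ((Fin (i + 1) → G) × (Fin (i + 1) → G)) × (Fin i → G) :=
  ((Fin.take (i + 1) i.isLt (X₁ ω), Fin.take (i + 1) i.isLt (X₂ ω)), Fin.take i i.isLt.le (Y ω))

/-- Each encoder is a deterministic function of the messages `M` and the past outputs;
`Fin.take i` keeps the coordinates `0, …, i - 1`. -/
structure IsAdditiveMAC (M : Ω → κ) (V X₁ X₂ Y : Ω → Fin n → G) : Prop where
  enc₁ : ∀ i : Fin n,
    (fun ω => X₁ ω i).FactorsThrough fun ω => (M ω, Fin.take i i.isLt.le (Y ω))
  enc₂ : ∀ i : Fin n,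
    (fun ω => X₂ ω i).FactorsThrough fun ω => (M ω, Fin.take i i.isLt.le (Y ω))
  add : ∀ ω i, Y ω i = X₁ ω i + X₂ ω i + V ω i

namespace IsAdditiveMAC

variable {V X₁ X₂ Y : Ω → Fin n → G}

theorem noise_eq (h : IsAdditiveMAC M V X₁ X₂ Y) (ω : Ω) (i : Fin n) :
    V ω i = Y ω i - X₁ ω i - X₂ ω i := by
  rw [h.add]
  abel

theorem factorsThrough_take_output (h : IsAdditiveMAC M V X₁ X₂ Y) (m : ℕ) (hm : m ≤ n) :
    (fun ω => Fin.take m hm (Y ω)).FactorsThrough fun ω => (M ω, Fin.take m hm (V ω)) := by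
  refine factorsThrough_take_of_causal (fun j a b hab => ?_) m hm
  obtain ⟨hM, hYV⟩ := Prod.mk_inj.1 hab
  obtain ⟨hY, hV⟩ := Prod.mk_inj.1 hYV
  have hMY := Prod.mk_inj.2 ⟨hM, hY⟩
  have hX₁ : X₁ a j = X₁ b j := h.enc₁ j hMY
  have hX₂ : X₂ a j = X₂ b j := h.enc₂ j hMY
  simp only [h.add a, h.add b, hX₁, hX₂, hV]

theorem feedbackState_factorsThrough (h : IsAdditiveMAC M V X₁ X₂ Y) (i : Fin n) :
    (feedbackState X₁ X₂ Y i).FactorsThrough fun ω => (M ω, Fin.take i i.isLt.le (V ω)) :=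
  fun a b hab => by
    have hY := h.factorsThrough_take_output i i.isLt.le hab
    have hMY := Prod.mk_inj.2 ⟨(Prod.mk_inj.1 hab).1, hY⟩
    exact Prod.mk_inj.2 ⟨Prod.mk_inj.2 ⟨factorsThrough_take_succ_of_strictlyCausal h.enc₁ i hMY,
      factorsThrough_take_succ_of_strictlyCausal h.enc₂ i hMY⟩, hY⟩

theorem take_noise_factorsThrough_feedbackState (h : IsAdditiveMAC M V X₁ X₂ Y) (i : Fin n) :
    (fun ω => Fin.take i i.isLt.le (V ω)).FactorsThrough (feedbackState X₁ X₂ Y i) :=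
  fun a b hab => by
    simp only [feedbackState, Prod.mk_inj, Fin.take_eq_take_iff] at hab
    obtain ⟨⟨hX₁, hX₂⟩, hY⟩ := hab
    refine (Fin.take_eq_take_iff _).2 fun j hj => ?_
    rw [h.noise_eq, h.noise_eq, hY j hj, hX₁ j (by omega), hX₂ j (by omega)]

end IsAdditiveMAC

end feedback

section finiteProbability

variable {Ω α β : Type*} [Fintype Ω] {μ : Ω → ℝ}

section pmass

variable [DecidableEq α] [DecidableEq β]

theorem pmass_congr {X : Ω → α} {X' : Ω → β} {a : α} {b : β}
    (h : ∀ ω, X ω = a ↔ X' ω = b) : pmass μ X a = pmass μ X' b := by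
  simp only [pmass, h]

theorem pmass_apply_self_pos (hμ : ∀ ω, 0 ≤ μ ω) (X : Ω → α) {ω : Ω}
    (hω : 0 < μ ω) : 0 < pmass μ X (X ω) := by
  have h := single_le_sum (f := fun ω' => if X ω' = X ω then μ ω' else 0)
    (fun ω' _ => by split_ifs <;> simp [hμ]) (mem_univ ω)
  rw [if_pos rfl] at h
  exact hω.trans_le h

theorem pmass_comp [Fintype α] (X : Ω → α) (φ : α → β) (b : β) :
    pmass μ (φ ∘ X) b = ∑ a, if φ a = b then pmass μ X a else 0 := by
  calc pmass μ (φ ∘ X) b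
      = ∑ ω, ∑ a, if X ω = a then (if φ a = b then μ ω else 0) else 0 := by simp [pmass]
    _ = ∑ a, if φ a = b then pmass μ X a else 0 := by
      rw [sum_comm]
      refine sum_congr rfl fun a _ => ?_
      by_cases h : φ a = b <;> simp [pmass, h]

theorem entropy_eq_neg_sum_mul_log_pmass [Fintype α] (X : Ω → α) :
    entropy μ X = -∑ ω, μ ω * Real.log (pmass μ X (X ω)) := by
  simp only [entropy, Real.negMulLog, neg_mul, sum_neg_distrib, pmass, sum_mul]
  rw [sum_comm]
  simp

end pmass

section entropy

variable {γ δ : Type*} [Fintype α] [DecidableEq α] [Fintype β] [DecidableEq β]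
  [Fintype γ] [DecidableEq γ] [Fintype δ] [DecidableEq δ]

theorem entropy_congr_of_fibers {X : Ω → α} {X' : Ω → β}
    (h : ∀ ω ω', X ω' = X ω ↔ X' ω' = X' ω) : entropy μ X = entropy μ X' := by
  simp only [entropy_eq_neg_sum_mul_log_pmass]
  congr 2 with ω
  rw [pmass_congr (h ω)]

theorem entropy_add_entropy_eq_of_pmass_mul_eq (hμ : ∀ ω, 0 ≤ μ ω)
    {A : Ω → α} {B : Ω → β} {C : Ω → γ} {D : Ω → δ}
    (h : ∀ ω, 0 < μ ω → pmass μ A (A ω) * pmass μ B (B ω) = pmass μ C (C ω) * pmass μ D (D ω)) :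
    entropy μ A + entropy μ B = entropy μ C + entropy μ D := by
  simp only [entropy_eq_neg_sum_mul_log_pmass, ← neg_add, ← sum_add_distrib, ← mul_add]
  congr 2 with ω
  rcases (hμ ω).eq_or_lt with hω | hω
  · simp [← hω]
  rw [← Real.log_mul (pmass_apply_self_pos hμ A hω).ne' (pmass_apply_self_pos hμ B hω).ne',
    ← Real.log_mul (pmass_apply_self_pos hμ C hω).ne' (pmass_apply_self_pos hμ D hω).ne', h ω hω]

end entropy

def IndepPmass (μ : Ω → ℝ) {κ : Type*} [DecidableEq α] [DecidableEq κ]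
    (X : Ω → α) (Z : Ω → κ) : Prop :=
  ∀ a b, pmass μ (fun ω => (X ω, Z ω)) (a, b) = pmass μ X a * pmass μ Z b

namespace IndepPmass

variable {ν κ : Type*} [Fintype ν] [DecidableEq ν] [Fintype κ] [DecidableEq κ]
  [DecidableEq α] [DecidableEq β]

theorem of_factorsThrough {N : Ω → ν} {M : Ω → κ} (hNM : IndepPmass μ N M)
    {A : Ω → α} {B : Ω → β} (hA : A.FactorsThrough N) (hB : B.FactorsThrough M) :
    IndepPmass μ A B := by
  intro a b
  have : Nonempty α := ⟨a⟩
  have : Nonempty β := ⟨b⟩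
  obtain ⟨φ, rfl⟩ := (factorsThrough_iff A).1 hA
  obtain ⟨ψ, rfl⟩ := (factorsThrough_iff B).1 hB
  rw [pmass_comp, pmass_comp]
  refine (pmass_comp (fun ω => (N ω, M ω)) (Prod.map φ ψ) (a, b)).trans ?_
  rw [Fintype.sum_prod_type, sum_mul_sum]
  refine sum_congr rfl fun x _ => sum_congr rfl fun y _ => ?_
  simp only [Prod.map, Prod.mk.injEq, hNM x y, ite_and]
  split_ifs <;> simp

end IndepPmass

section condIndep

variable {ν κ σ τ : Type*} [Fintype ν] [DecidableEq ν] [Fintype κ] [DecidableEq κ]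
  [DecidableEq β] [DecidableEq σ] [DecidableEq τ]
  {N : Ω → ν} {M : Ω → κ} {S : Ω → σ} {U : Ω → β} {T : Ω → τ}

theorem pmass_pair_mul_pmass_eq_of_factorsThrough (hNM : IndepPmass μ N M)
    (hU : U.FactorsThrough N) (hT : T.FactorsThrough N) (hUS : U.FactorsThrough S)
    (hS : S.FactorsThrough fun ω => (M ω, U ω)) (ω : Ω) :
    pmass μ (fun ω => (S ω, T ω)) (S ω, T ω) * pmass μ U (U ω) =
      pmass μ S (S ω) * pmass μ (fun ω => (U ω, T ω)) (U ω, T ω) := by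
  have : Nonempty σ := ⟨S ω⟩
  obtain ⟨g, hg⟩ := (factorsThrough_iff S).1 hS
  have hg' : ∀ ω', g (M ω', U ω') = S ω' := fun ω' => (congrFun hg ω').symm
  -- On the event `U = U ω`, the event `S = S ω` is the `M`-measurable event `B = S ω`.
  set B : Ω → σ := fun ω' => g (M ω', U ω)
  have hB : B.FactorsThrough M := fun ω₁ ω₂ h => by simp only [B, h]
  have hSB : ∀ ω', S ω' = S ω ↔ U ω' = U ω ∧ B ω' = S ω := fun ω' =>
    ⟨fun h => ⟨hUS h, by simp only [B]; rw [← hUS h, hg', h]⟩,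
      fun ⟨hu, hb⟩ => by rw [← hg', hu]; exact hb⟩
  have hUT : (fun ω => (U ω, T ω)).FactorsThrough N := fun ω₁ ω₂ h => by
    simp only [hU h, hT h]
  have hS_eq : pmass μ S (S ω) = pmass μ U (U ω) * pmass μ B (S ω) := by
    rw [pmass_congr (X' := fun ω' => (U ω', B ω')) (b := (U ω, S ω))
      fun ω' => (hSB ω').trans Prod.mk_inj.symm]
    exact hNM.of_factorsThrough hU hB _ _
  have hST_eq : pmass μ (fun ω => (S ω, T ω)) (S ω, T ω) =
      pmass μ (fun ω => (U ω, T ω)) (U ω, T ω) * pmass μ B (S ω) := by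
    rw [pmass_congr (X' := fun ω' => ((U ω', T ω'), B ω')) (b := ((U ω, T ω), S ω))
      fun ω' => by simp only [Prod.ext_iff, hSB]; tauto]
    exact hNM.of_factorsThrough hUT hB _ _
  rw [hS_eq, hST_eq]
  ring

variable [Fintype β] [Fintype σ] [Fintype τ]

theorem entropy_pair_sub_entropy_eq_of_factorsThrough (hμ : ∀ ω, 0 ≤ μ ω)
    (hNM : IndepPmass μ N M) (hU : U.FactorsThrough N) (hT : T.FactorsThrough N)
    (hUS : U.FactorsThrough S) (hS : S.FactorsThrough fun ω => (M ω, U ω)) :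
    entropy μ (fun ω => (S ω, T ω)) - entropy μ S =
      entropy μ (fun ω => (U ω, T ω)) - entropy μ U := by
  have := entropy_add_entropy_eq_of_pmass_mul_eq hμ fun ω _ =>
    pmass_pair_mul_pmass_eq_of_factorsThrough hNM hU hT hUS hS ω
  linarith

end condIndep

section additiveMAC

variable {κ G : Type*} [AddCommGroup G] [Fintype G] [DecidableEq G] {n : ℕ}
  {M : Ω → κ} {V X₁ X₂ Y : Ω → Fin n → G}

namespace IsAdditiveMAC

theorem entropy_inputs_output_eq (h : IsAdditiveMAC M V X₁ X₂ Y) (i : Fin n) :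
    entropy μ (fun ω =>
        (((Fin.take (i + 1) i.isLt (X₁ ω), Fin.take (i + 1) i.isLt (X₂ ω)), Y ω i),
          Fin.take i i.isLt.le (Y ω))) =
      entropy μ (fun ω => (feedbackState X₁ X₂ Y i ω, V ω i)) := by
  refine entropy_congr_of_fibers fun ω ω' => ?_
  have hlast {Z : Ω → Fin n → G}
      (hZ : Fin.take (i + 1) i.isLt (Z ω') = Fin.take (i + 1) i.isLt (Z ω)) : Z ω' i = Z ω i :=
    ((Fin.take_succ_eq_take_succ_iff i).1 hZ).1
  simp only [feedbackState, Prod.mk_inj]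
  constructor
  · rintro ⟨⟨⟨hX₁, hX₂⟩, hYi⟩, hY⟩
    refine ⟨⟨⟨hX₁, hX₂⟩, hY⟩, ?_⟩
    rw [h.noise_eq, h.noise_eq, hYi, hlast hX₁, hlast hX₂]
  · rintro ⟨⟨⟨hX₁, hX₂⟩, hY⟩, hVi⟩
    refine ⟨⟨⟨hX₁, hX₂⟩, ?_⟩, hY⟩
    rw [h.add, h.add, hlast hX₁, hlast hX₂, hVi]

variable [Fintype κ] [DecidableEq κ]

theorem condMutualInfo_eq (h : IsAdditiveMAC M V X₁ X₂ Y) (hμ : ∀ ω, 0 ≤ μ ω)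
    (hMV : IndepPmass μ V M) (i : Fin n) :
    condMutualInfo μ
        (fun ω => (Fin.take (i + 1) i.isLt (X₁ ω), Fin.take (i + 1) i.isLt (X₂ ω)))
        (fun ω => Y ω i) (fun ω => Fin.take i i.isLt.le (Y ω)) =
      (entropy μ (fun ω => Fin.take (i + 1) i.isLt (Y ω)) -
          entropy μ (fun ω => Fin.take (i + 1) i.isLt (V ω))) -
        (entropy μ (fun ω => Fin.take i i.isLt.le (Y ω)) -
          entropy μ (fun ω => Fin.take i i.isLt.le (V ω))) := by
  have hV_state := entropy_pair_sub_entropy_eq_of_factorsThrough hμ hMV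
    (fun a b hab => by simp only [hab]) (fun a b hab => by simp only [hab])
    (h.take_noise_factorsThrough_feedbackState i) (h.feedbackState_factorsThrough i)
    (T := fun ω => V ω i)
  have hY_succ : entropy μ (fun ω => (Y ω i, Fin.take i i.isLt.le (Y ω))) =
      entropy μ (fun ω => Fin.take (i + 1) i.isLt (Y ω)) :=
    entropy_congr_of_fibers fun _ _ => Prod.mk_inj.trans (Fin.take_succ_eq_take_succ_iff i).symm
  have hV_succ : entropy μ (fun ω => (Fin.take i i.isLt.le (V ω), V ω i)) =
      entropy μ (fun ω => Fin.take (i + 1) i.isLt (V ω)) :=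
    entropy_congr_of_fibers fun _ _ =>
      Prod.mk_inj.trans (and_comm.trans (Fin.take_succ_eq_take_succ_iff i).symm)
  have hState : entropy μ (fun ω => ((Fin.take (i + 1) i.isLt (X₁ ω),
      Fin.take (i + 1) i.isLt (X₂ ω)), Fin.take i i.isLt.le (Y ω))) =
      entropy μ (feedbackState X₁ X₂ Y i) := rfl
  rw [condMutualInfo, hState, hY_succ, h.entropy_inputs_output_eq, ← hV_succ]
  linarith

end IsAdditiveMAC

end additiveMAC

end finiteProbability

theorem additiveMAC_directedInfo_eq_output_entropy_sub_noise_entropy_general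
    {Ω 𝒲₁ 𝒲₂ : Type*} [Fintype Ω]
    [Fintype 𝒲₁] [DecidableEq 𝒲₁]
    [Fintype 𝒲₂] [DecidableEq 𝒲₂]
    (q : ℕ) [NeZero q] {n : ℕ}
    (μ : Ω → ℝ) (hμ0 : ∀ ω, 0 ≤ μ ω)
    (W₁ : Ω → 𝒲₁) (W₂ : Ω → 𝒲₂)
    (V X₁ X₂ Y : Ω → Fin n → ZMod q)
    (hIndep : ∀ (v : Fin n → ZMod q) (w : 𝒲₁ × 𝒲₂),
      pmass μ (fun ω => (V ω, (W₁ ω, W₂ ω))) (v, w) =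
        pmass μ V v * pmass μ (fun ω => (W₁ ω, W₂ ω)) w)
    (hEnc1 : ∀ i : Fin n, ∃ g : 𝒲₁ → (Fin (i : ℕ) → ZMod q) → ZMod q,
      ∀ ω, X₁ ω i = g (W₁ ω) (fun j => Y ω (Fin.castLE i.isLt.le j)))
    (hEnc2 : ∀ i : Fin n, ∃ g : 𝒲₂ → (Fin (i : ℕ) → ZMod q) → ZMod q,
      ∀ ω, X₂ ω i = g (W₂ ω) (fun j => Y ω (Fin.castLE i.isLt.le j)))
    (hAdd : ∀ ω (i : Fin n), Y ω i = X₁ ω i + X₂ ω i + V ω i) :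
    (∑ i : Fin n, condMutualInfo μ
        (fun ω => ((fun j : Fin ((i : ℕ) + 1) => X₁ ω (Fin.castLE i.isLt j)),
                   (fun j : Fin ((i : ℕ) + 1) => X₂ ω (Fin.castLE i.isLt j))))
        (fun ω => Y ω i)
        (fun ω => fun j : Fin (i : ℕ) => Y ω (Fin.castLE i.isLt.le j))) =
      entropy μ Y - entropy μ V := by
  have hMAC : IsAdditiveMAC (fun ω => (W₁ ω, W₂ ω)) V X₁ X₂ Y :=
    { enc₁ := fun i => by
        obtain ⟨g, hg⟩ := hEnc1 i
        exact (factorsThrough_iff _).2 ⟨fun p => g p.1.1 p.2, funext hg⟩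
      enc₂ := fun i => by
        obtain ⟨g, hg⟩ := hEnc2 i
        exact (factorsThrough_iff _).2 ⟨fun p => g p.1.2 p.2, funext hg⟩
      add := hAdd }
  set f : Fin (n + 1) → ℝ := fun k => entropy μ (fun ω => Fin.take k k.is_le (Y ω)) -
    entropy μ (fun ω => Fin.take k k.is_le (V ω))
  have hf0 : f 0 = 0 := sub_eq_zero.2 <| entropy_congr_of_fibers fun _ _ =>
    iff_of_true (funext fun j => j.elim0) (funext fun j => j.elim0)
  calc _ = ∑ i : Fin n, (f i.succ - f i.castSucc) :=
        sum_congr rfl fun i _ => hMAC.condMutualInfo_eq hμ0 hIndep i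
    _ = f (Fin.last n) - f 0 := Fin.sum_univ_succ_sub_castSucc f
    _ = entropy μ Y - entropy μ V := by simp only [hf0, f, Fin.val_last, Fin.take_eq_self, sub_zero]

/-- For the additive mod-`q` MAC with feedback — output `Y_i = X_{1,i} + X_{2,i} + V_i`
(mod `q`), noise `V^n` independent of the messages `(W₁, W₂)`, and inputs produced by
deterministic encoders `X_{l,i} = g_{l,i}(W_l, Y^{i-1})` — the sum-rate directed
information satisfies
`I((X₁, X₂)^n → Y^n) = ∑_{i=1}^n I((X₁^i, X₂^i); Y_i | Y^{i-1}) = H(Y^n) − H(V^n)`. -/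
theorem additiveMAC_directedInfo_eq_output_entropy_sub_noise_entropy
    {Ω 𝒲₁ 𝒲₂ : Type*} [Fintype Ω]
    [Fintype 𝒲₁] [DecidableEq 𝒲₁] [Nonempty 𝒲₁]
    [Fintype 𝒲₂] [DecidableEq 𝒲₂] [Nonempty 𝒲₂]
    (q : ℕ) [NeZero q] {n : ℕ} (hn : 1 ≤ n)
    (μ : Ω → ℝ) (hμ0 : ∀ ω, 0 ≤ μ ω) (hμ1 : ∑ ω, μ ω = 1)
    (W₁ : Ω → 𝒲₁) (W₂ : Ω → 𝒲₂)
    (V X₁ X₂ Y : Ω → Fin n → ZMod q)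
    (hIndep : ∀ (v : Fin n → ZMod q) (w : 𝒲₁ × 𝒲₂),
      pmass μ (fun ω => (V ω, (W₁ ω, W₂ ω))) (v, w) =
        pmass μ V v * pmass μ (fun ω => (W₁ ω, W₂ ω)) w)
    (hEnc1 : ∀ i : Fin n, ∃ g : 𝒲₁ → (Fin (i : ℕ) → ZMod q) → ZMod q,
      ∀ ω, X₁ ω i = g (W₁ ω) (fun j => Y ω (Fin.castLE i.isLt.le j)))
    (hEnc2 : ∀ i : Fin n, ∃ g : 𝒲₂ → (Fin (i : ℕ) → ZMod q) → ZMod q,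
      ∀ ω, X₂ ω i = g (W₂ ω) (fun j => Y ω (Fin.castLE i.isLt.le j)))
    (hAdd : ∀ ω (i : Fin n), Y ω i = X₁ ω i + X₂ ω i + V ω i) :
    (∑ i : Fin n, condMutualInfo μ
        (fun ω => ((fun j : Fin ((i : ℕ) + 1) => X₁ ω (Fin.castLE i.isLt j)),
                   (fun j : Fin ((i : ℕ) + 1) => X₂ ω (Fin.castLE i.isLt j))))
        (fun ω => Y ω i)
        (fun ω => fun j : Fin (i : ℕ) => Y ω (Fin.castLE i.isLt.le j))) =
      entropy μ Y - entropy μ V :=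
  additiveMAC_directedInfo_eq_output_entropy_sub_noise_entropy_general q μ hμ0 W₁ W₂ V X₁ X₂ Y
    hIndep hEnc1 hEnc2 hAdd
end
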